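/- Let G be a superoperator on ℂ^{2×2} and 0 ≤ ε ≤ 1 such that ‖G(ζ_a^±) − ζ_a^±‖₁ ≤ ε for all six states ζ_x^±, ζ_y^±, ζ_z^±. Then the superoperator norm of G − I is at most 8ε. -/

import Mathlib

open Matrix
open scoped ComplexOrder

/-- The outer product |ψ⟩⟨ψ|. -/
noncomputable def outer (ψ : Fin 2 → ℂ) : Matrix (Fin 2) (Fin 2) ℂ :=
  Matrix.vecMulVec ψ (star ψ)

noncomputable def zetaXp : Matrix (Fin 2) (Fin 2) ℂ := outer ![1 / Real.sqrt 2, 1 / Real.sqrt 2]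
noncomputable def zetaXm : Matrix (Fin 2) (Fin 2) ℂ := outer ![1 / Real.sqrt 2, -(1 / Real.sqrt 2)]
noncomputable def zetaYp : Matrix (Fin 2) (Fin 2) ℂ :=
  outer ![1 / Real.sqrt 2, (1 / Real.sqrt 2 : ℝ) * Complex.I]
noncomputable def zetaYm : Matrix (Fin 2) (Fin 2) ℂ :=
  outer ![1 / Real.sqrt 2, -((1 / Real.sqrt 2 : ℝ) * Complex.I)]
noncomputable def zetaZp : Matrix (Fin 2) (Fin 2) ℂ := outer ![1, 0]
noncomputable def zetaZm : Matrix (Fin 2) (Fin 2) ℂ := outer ![0, 1]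

/-- The trace norm ‖V‖₁ = Tr √(V†V). -/
noncomputable def traceNorm (V : Matrix (Fin 2) (Fin 2) ℂ) : ℝ :=
  (((Matrix.posSemidef_conjTranspose_mul_self V).1.eigenvectorUnitary.1 *
      diagonal (((↑) : ℝ → ℂ) ∘ (Real.sqrt ∘ (Matrix.posSemidef_conjTranspose_mul_self V).1.eigenvalues)) *
      (star (Matrix.posSemidef_conjTranspose_mul_self V).1.eigenvectorUnitary :
        Matrix (Fin 2) (Fin 2) ℂ)).trace).re

/-!
Expanding `V` along `ζ_z⁺`, `ζ_z⁻`, `ζ_x⁺ - ζ_x⁻ = σ_x` and `ζ_y⁺ - ζ_y⁻ = σ_y` and applying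
`G - I`, the triangle inequality for the Frobenius norm gives
`‖(G - I) V‖₂ ≤ 2ε ∑ |V i j| ≤ 4ε ‖V‖₂`. On `2 × 2` matrices `‖·‖₂ ≤ ‖·‖₁ ≤ √2 ‖·‖₂`,
since `‖V‖₁ = ∑ √λᵢ` and `‖V‖₂² = ∑ λᵢ` for the eigenvalues `λᵢ ≥ 0` of `V†V`.
Hence `‖(G - I) V‖₁ ≤ 4√2 ε ≤ 8ε` whenever `‖V‖₁ = 1`.
-/

attribute [local instance] Matrix.frobeniusNormedAddCommGroup Matrix.frobeniusNormedSpace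

namespace Matrix

variable {m n 𝕜 α : Type*} [Fintype m] [Fintype n] [RCLike 𝕜] [NormedAddCommGroup α]

theorem frobenius_norm_sq_eq_sum (V : Matrix m n α) : ‖V‖ ^ 2 = ∑ i, ∑ j, ‖V i j‖ ^ 2 := by
  rw [frobenius_norm_def, ← Real.rpow_natCast _ 2, ← Real.rpow_mul (by positivity)]
  norm_num

theorem re_trace_conjTranspose_mul_self (V : Matrix m n 𝕜) :
    RCLike.re (Vᴴ * V).trace = ∑ i, ∑ j, ‖V i j‖ ^ 2 := by
  simp only [trace, diag_apply, mul_apply, conjTranspose_apply, map_sum]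
  rw [Finset.sum_comm]
  simp only [RCLike.star_def, RCLike.conj_mul]
  norm_cast

theorem frobenius_norm_sq_eq_sum_eigenvalues [DecidableEq n] (V : Matrix m n 𝕜) :
    ‖V‖ ^ 2 = ∑ i, (posSemidef_conjTranspose_mul_self V).1.eigenvalues i := by
  rw [frobenius_norm_sq_eq_sum, ← re_trace_conjTranspose_mul_self,
    (posSemidef_conjTranspose_mul_self V).1.trace_eq_sum_eigenvalues]
  simp

theorem sq_sum_norm_entries_le (V : Matrix m n α) :
    (∑ i, ∑ j, ‖V i j‖) ^ 2 ≤ (Fintype.card m * Fintype.card n) * ‖V‖ ^ 2 := by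
  have := sq_sum_le_card_mul_sum_sq (s := Finset.univ) (f := fun p : m × n ↦ ‖V p.1 p.2‖)
  simpa [frobenius_norm_sq_eq_sum, Fintype.sum_prod_type] using this

end Matrix

theorem traceNorm_eq_sum_sqrt_eigenvalues (V : Matrix (Fin 2) (Fin 2) ℂ) :
    traceNorm V = ∑ i, √((posSemidef_conjTranspose_mul_self V).1.eigenvalues i) := by
  rw [traceNorm, trace_mul_cycle, Unitary.coe_star_mul_self, Matrix.one_mul, trace_diagonal]
  simp

theorem norm_sq_eq_sum_sq_sqrt_eigenvalues (V : Matrix (Fin 2) (Fin 2) ℂ) :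
    ‖V‖ ^ 2 = ∑ i, √((posSemidef_conjTranspose_mul_self V).1.eigenvalues i) ^ 2 := by
  simp only [Real.sq_sqrt ((posSemidef_conjTranspose_mul_self V).eigenvalues_nonneg _),
    frobenius_norm_sq_eq_sum_eigenvalues]

theorem norm_le_traceNorm (V : Matrix (Fin 2) (Fin 2) ℂ) : ‖V‖ ≤ traceNorm V := by
  rw [traceNorm_eq_sum_sqrt_eigenvalues]
  refine le_of_sq_le_sq ?_ (Finset.sum_nonneg fun i _ ↦ Real.sqrt_nonneg _)
  rw [norm_sq_eq_sum_sq_sqrt_eigenvalues]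
  exact Finset.sum_sq_le_sq_sum_of_nonneg fun i _ ↦ Real.sqrt_nonneg _

theorem traceNorm_le_sqrt_two_mul_norm (V : Matrix (Fin 2) (Fin 2) ℂ) :
    traceNorm V ≤ √2 * ‖V‖ := by
  rw [traceNorm_eq_sum_sqrt_eigenvalues, ← Real.sqrt_sq (norm_nonneg V),
    ← Real.sqrt_mul zero_le_two, Real.le_sqrt (by positivity) (by positivity),
    norm_sq_eq_sum_sq_sqrt_eigenvalues]
  simpa using sq_sum_le_card_mul_sum_sq (s := Finset.univ)
    (f := fun i ↦ √((posSemidef_conjTranspose_mul_self V).1.eigenvalues i))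

open Complex ComplexConjugate

theorem outer_eq (a b : ℂ) :
    outer ![a, b] = !![a * conj a, a * conj b; b * conj a, b * conj b] := by
  ext i j; fin_cases i <;> fin_cases j <;> rfl

theorem ofReal_sqrt_two_sq : ((√2 : ℝ) : ℂ) ^ 2 = 2 := by
  rw [← ofReal_pow, Real.sq_sqrt zero_le_two, ofReal_ofNat]

theorem zetaZp_eq : zetaZp = !![1, 0; 0, 0] := by
  rw [zetaZp, outer_eq]; simp

theorem zetaZm_eq : zetaZm = !![0, 0; 0, 1] := by
  rw [zetaZm, outer_eq]; simp

theorem zetaXp_sub_zetaXm : zetaXp - zetaXm = !![0, 1; 1, 0] := by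
  rw [zetaXp, zetaXm, outer_eq, outer_eq]
  ext i j; fin_cases i <;> fin_cases j <;> simp <;> field_simp <;> norm_num [ofReal_sqrt_two_sq]

theorem zetaYp_sub_zetaYm : zetaYp - zetaYm = !![0, -I; I, 0] := by
  rw [zetaYp, zetaYm, outer_eq, outer_eq]
  ext i j; fin_cases i <;> fin_cases j <;> simp <;> field_simp <;> norm_num [ofReal_sqrt_two_sq]

theorem eq_linear_combination_six_states (V : Matrix (Fin 2) (Fin 2) ℂ) :
    V = V 0 0 • zetaZp + V 1 1 • zetaZm + ((V 0 1 + V 1 0) / 2) • (zetaXp - zetaXm)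
      + ((V 0 1 - V 1 0) * I / 2) • (zetaYp - zetaYm) := by
  rw [zetaZp_eq, zetaZm_eq, zetaXp_sub_zetaXm, zetaYp_sub_zetaYm]
  ext i j
  fin_cases i <;> fin_cases j <;> simp <;> ring_nf <;> simp [I_sq] <;> ring

theorem sum_norm_entries_le (V : Matrix (Fin 2) (Fin 2) ℂ) : ∑ i, ∑ j, ‖V i j‖ ≤ 2 * ‖V‖ := by
  refine le_of_sq_le_sq ?_ (by positivity)
  have h := sq_sum_norm_entries_le V
  simp only [Fintype.card_fin, Nat.cast_ofNat] at h
  linarith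

theorem norm_apply_le_of_six_states (T : Matrix (Fin 2) (Fin 2) ℂ →ₗ[ℂ] Matrix (Fin 2) (Fin 2) ℂ)
    {ε : ℝ} (hx : ‖T zetaXp‖ ≤ ε ∧ ‖T zetaXm‖ ≤ ε) (hy : ‖T zetaYp‖ ≤ ε ∧ ‖T zetaYm‖ ≤ ε)
    (hz : ‖T zetaZp‖ ≤ ε ∧ ‖T zetaZm‖ ≤ ε) (V : Matrix (Fin 2) (Fin 2) ℂ) :
    ‖T V‖ ≤ 4 * ε * ‖V‖ := by
  have hε : 0 ≤ ε := (norm_nonneg _).trans hz.1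
  have hX : ‖T zetaXp - T zetaXm‖ ≤ 2 * ε := (norm_sub_le _ _).trans (by linarith)
  have hY : ‖T zetaYp - T zetaYm‖ ≤ 2 * ε := (norm_sub_le _ _).trans (by linarith)
  have hcX : ‖(V 0 1 + V 1 0) / 2‖ ≤ (‖V 0 1‖ + ‖V 1 0‖) / 2 := by
    rw [norm_div, RCLike.norm_ofNat]
    gcongr
    exact norm_add_le _ _
  have hcY : ‖(V 0 1 - V 1 0) * I / 2‖ ≤ (‖V 0 1‖ + ‖V 1 0‖) / 2 := by
    rw [norm_div, norm_mul, norm_I, mul_one, RCLike.norm_ofNat]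
    gcongr
    exact norm_sub_le _ _
  calc ‖T V‖ = ‖V 0 0 • T zetaZp + V 1 1 • T zetaZm + ((V 0 1 + V 1 0) / 2) • (T zetaXp - T zetaXm)
        + ((V 0 1 - V 1 0) * I / 2) • (T zetaYp - T zetaYm)‖ := by
        conv_lhs => rw [eq_linear_combination_six_states V]
        simp only [map_add, map_smul, map_sub]
    _ ≤ ‖V 0 0‖ * ε + ‖V 1 1‖ * ε + (‖V 0 1‖ + ‖V 1 0‖) / 2 * (2 * ε)
        + (‖V 0 1‖ + ‖V 1 0‖) / 2 * (2 * ε) := by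
        refine norm_add₄_le.trans ?_
        simp only [norm_smul]
        gcongr
        exacts [hz.1, hz.2]
    _ ≤ 2 * ε * ∑ i, ∑ j, ‖V i j‖ := by
        simp only [Fin.sum_univ_two]
        nlinarith [norm_nonneg (V 0 0), norm_nonneg (V 1 1)]
    _ ≤ 4 * ε * ‖V‖ := by nlinarith [sum_norm_entries_le V]

theorem near_identity_on_six_states_general (ε : ℝ)
    (G : Matrix (Fin 2) (Fin 2) ℂ →ₗ[ℂ] Matrix (Fin 2) (Fin 2) ℂ)
    (hx : traceNorm (G zetaXp - zetaXp) ≤ ε ∧ traceNorm (G zetaXm - zetaXm) ≤ ε)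
    (hy : traceNorm (G zetaYp - zetaYp) ≤ ε ∧ traceNorm (G zetaYm - zetaYm) ≤ ε)
    (hz : traceNorm (G zetaZp - zetaZp) ≤ ε ∧ traceNorm (G zetaZm - zetaZm) ≤ ε) :
    ∀ V : Matrix (Fin 2) (Fin 2) ℂ, traceNorm V = 1 →
      traceNorm (G V - V) ≤ 8 * ε := by
  intro V hV
  have hε : 0 ≤ ε := (norm_nonneg _).trans ((norm_le_traceNorm _).trans hz.1)
  set T : Matrix (Fin 2) (Fin 2) ℂ →ₗ[ℂ] Matrix (Fin 2) (Fin 2) ℂ := G - LinearMap.id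
  have hdefect (ρ : Matrix (Fin 2) (Fin 2) ℂ) (hρ : traceNorm (G ρ - ρ) ≤ ε) : ‖T ρ‖ ≤ ε :=
    (norm_le_traceNorm _).trans hρ
  have hGV : ‖G V - V‖ ≤ 4 * ε * ‖V‖ :=
    norm_apply_le_of_six_states T ⟨hdefect _ hx.1, hdefect _ hx.2⟩
      ⟨hdefect _ hy.1, hdefect _ hy.2⟩ ⟨hdefect _ hz.1, hdefect _ hz.2⟩ V
  have hV' : ‖V‖ ≤ 1 := hV ▸ norm_le_traceNorm V
  have hsqrt2 : √2 ≤ 2 := Real.sqrt_le_iff.mpr ⟨zero_le_two, by norm_num⟩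
  calc traceNorm (G V - V) ≤ √2 * ‖G V - V‖ := traceNorm_le_sqrt_two_mul_norm _
    _ ≤ √2 * (4 * ε * ‖V‖) := by gcongr
    _ ≤ 2 * (4 * ε * 1) := by gcongr
    _ = 8 * ε := by ring

theorem near_identity_on_six_states (ε : ℝ) (hε : 0 ≤ ε ∧ ε ≤ 1)
    (G : Matrix (Fin 2) (Fin 2) ℂ →ₗ[ℂ] Matrix (Fin 2) (Fin 2) ℂ)
    (hx : traceNorm (G zetaXp - zetaXp) ≤ ε ∧ traceNorm (G zetaXm - zetaXm) ≤ ε)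
    (hy : traceNorm (G zetaYp - zetaYp) ≤ ε ∧ traceNorm (G zetaYm - zetaYm) ≤ ε)
    (hz : traceNorm (G zetaZp - zetaZp) ≤ ε ∧ traceNorm (G zetaZm - zetaZm) ≤ ε) :
    ∀ V : Matrix (Fin 2) (Fin 2) ℂ, traceNorm V = 1 →
      traceNorm (G V - V) ≤ 8 * ε :=
  near_identity_on_six_states_general ε G hx hy hz
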